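/- arXiv:1905.02588 — 6 statements merged into one kernel-verified Lean document; each statement's English description precedes it below -/
import Mathlib

section
/- For every z in the open unit disk of the complex plane, the integral over the unit disk of the absolute value of the Green function G(z,ζ) = (1/(2π)) log |(1 - z·conj(ζ))/(z - ζ)| with respect to Lebesgue area measure in ζ equals (1 - |z|²)/4. -/
open MeasureTheory Complex

/-- Green function of the unit disk. -/
noncomputable def greenD (z ζ : ℂ) : ℝ :=
  (1 / (2 * Real.pi)) * Real.log ‖(1 - z * (starRingEnd ℂ) ζ) / (z - ζ)‖

/-!
The identity `‖1 - z ζ̄‖² - ‖z - ζ‖² = (1 - ‖z‖²)(1 - ‖ζ‖²)` shows `G ≥ 0` on the disk, so the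
absolute value can be dropped and the integral computed in polar coordinates. On the circle
`‖ζ‖ = r` one has `r ‖1 - z ζ̄‖ = ‖ζ - r² z‖`, and the classical circle averages of `log ‖ζ - a‖`
(equal to `log (max r ‖a‖)`) give `circleAverage G = -log (max r ‖z‖) / (2π)`. What remains is
`-∫₀¹ r log (max r ‖z‖) dr = (1 - ‖z‖²) / 4`.
-/

open Real Set Metric Filter ComplexConjugate

theorem norm_one_sub_mul_conj_sq_sub_norm_sub_sq (z ζ : ℂ) :
    ‖1 - z * conj ζ‖ ^ 2 - ‖z - ζ‖ ^ 2 = (1 - ‖z‖ ^ 2) * (1 - ‖ζ‖ ^ 2) := by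
  simp only [Complex.sq_norm, normSq_apply, sub_re, sub_im, mul_re, mul_im, one_re, one_im,
    conj_re, conj_im]
  ring

theorem one_sub_mul_conj_ne_zero {z ζ : ℂ} (h : ‖z‖ * ‖ζ‖ < 1) : 1 - z * conj ζ ≠ 0 := by
  intro h0
  have := congrArg norm (sub_eq_zero.1 h0)
  rw [norm_one, norm_mul, RCLike.norm_conj] at this
  linarith

theorem norm_mul_norm_one_sub_mul_conj (z ζ : ℂ) :
    ‖ζ‖ * ‖1 - z * conj ζ‖ = ‖ζ - (‖ζ‖ ^ 2 : ℝ) * z‖ := by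
  rw [← norm_mul, ofReal_pow, ← mul_conj', mul_sub, mul_one]
  ring_nf

theorem circleAverage_log_norm_sub_const_eq_log_max {a c : ℂ} {r : ℝ} (hr : 0 < r) :
    circleAverage (Real.log ‖· - a‖) c r = Real.log (max r ‖c - a‖) := by
  rw [circleAverage_log_norm_sub_const_eq_log_radius_add_posLog hr.ne',
    posLog_eq_log_max_one (by positivity), ← log_mul hr.ne' (by positivity),
    mul_max_of_nonneg _ _ hr.le, mul_one, mul_inv_cancel_left₀ hr.ne']

theorem circleAverage_log_norm_one_sub_mul_conj {z : ℂ} {r : ℝ} (hr : 0 < r) (h : ‖z‖ * r < 1) :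
    circleAverage (fun ζ ↦ Real.log ‖1 - z * conj ζ‖) 0 r = 0 := by
  have hlt : ‖(r ^ 2 : ℝ) * z‖ < r := by
    rw [norm_mul, norm_real, Real.norm_of_nonneg (by positivity)]
    nlinarith
  have hEq : EqOn (fun ζ ↦ Real.log ‖1 - z * conj ζ‖)
      (fun ζ ↦ Real.log ‖ζ - (r ^ 2 : ℝ) * z‖ - Real.log r) (sphere 0 |r|) := by
    intro ζ hζ
    rw [mem_sphere_zero_iff_norm, abs_of_pos hr] at hζ
    have key := norm_mul_norm_one_sub_mul_conj z ζ
    rw [hζ] at key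
    have hne : ‖ζ - (r ^ 2 : ℝ) * z‖ ≠ 0 := by
      linarith [norm_sub_norm_le ζ ((r ^ 2 : ℝ) * z)]
    dsimp only
    rw [← key, log_mul hr.ne' (right_ne_zero_of_mul (key ▸ hne)), add_sub_cancel_left]
  rw [circleAverage_congr_sphere hEq, circleAverage_fun_sub (circleIntegrable_log_norm_sub_const r)
    (circleIntegrable_const _ _ _), circleAverage_log_norm_sub_const_of_mem_closedBall
    (by simpa [abs_of_pos hr] using hlt.le), circleAverage_const, sub_self]

theorem circleIntegrable_log_norm_one_sub_mul_conj {z : ℂ} {r : ℝ} (h : ‖z‖ * |r| < 1) :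
    CircleIntegrable (fun ζ ↦ Real.log ‖1 - z * conj ζ‖) 0 r := by
  refine ContinuousOn.circleIntegrable' (ContinuousOn.log (by fun_prop) fun ζ hζ ↦ ?_)
  rw [mem_sphere_zero_iff_norm] at hζ
  exact norm_ne_zero_iff.2 (one_sub_mul_conj_ne_zero (hζ ▸ h))

theorem polarCoord_symm_eq_circleMap (p : ℝ × ℝ) :
    Complex.polarCoord.symm p = circleMap 0 p.1 p.2 := by
  rw [Complex.polarCoord_symm_apply, circleMap_zero, exp_mul_I, ← ofReal_cos, ← ofReal_sin]

theorem lintegral_ball_eq_lintegral_circleMap {g : ℂ → ENNReal} (hg : Measurable g) (R : ℝ) :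
    ∫⁻ ζ in ball (0 : ℂ) R, g ζ =
      ∫⁻ r in Ioo 0 R, ∫⁻ θ in Ioo (-π) π, ENNReal.ofReal r * g (circleMap 0 r θ) := by
  have hmeas : Measurable fun p : ℝ × ℝ ↦
      ENNReal.ofReal p.1 * (ball (0 : ℂ) R).indicator g (circleMap 0 p.1 p.2) := by
    refine ENNReal.measurable_ofReal.comp measurable_fst |>.mul ?_
    exact (hg.indicator measurableSet_ball).comp (by unfold circleMap; fun_prop)
  have hinner : ∀ r ∈ Ioi (0 : ℝ),
      ∫⁻ θ in Ioo (-π) π, ENNReal.ofReal r * (ball (0 : ℂ) R).indicator g (circleMap 0 r θ) =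
        (Iio R).indicator
          (fun r ↦ ∫⁻ θ in Ioo (-π) π, ENNReal.ofReal r * g (circleMap 0 r θ)) r := by
    intro r hr
    have hmem : ∀ θ, circleMap 0 r θ ∈ ball (0 : ℂ) R ↔ r ∈ Iio R := fun θ ↦ by
      rw [mem_ball_zero_iff, norm_circleMap_zero, abs_of_pos hr, mem_Iio]
    by_cases hrR : r ∈ Iio R
    · simp only [indicator_of_mem hrR, indicator_of_mem ((hmem _).2 hrR)]
    · simp only [indicator_of_notMem hrR, indicator_of_notMem (mt (hmem _).1 hrR), mul_zero,
        lintegral_zero]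
  rw [← lintegral_indicator measurableSet_ball, ← Complex.lintegral_comp_polarCoord_symm,
    polarCoord_target, Measure.volume_eq_prod, ← Measure.prod_restrict]
  simp_rw [polarCoord_symm_eq_circleMap, smul_eq_mul]
  rw [lintegral_prod _ hmeas.aemeasurable, setLIntegral_congr_fun measurableSet_Ioi hinner,
    lintegral_indicator measurableSet_Iio, Measure.restrict_restrict measurableSet_Iio,
    Iio_inter_Ioi]

theorem lintegral_circleMap_eq_ofReal_circleAverage {f : ℂ → ℝ} {c : ℂ} {r : ℝ}
    (hf : CircleIntegrable f c r) (hf₀ : ∀ x ∈ sphere c |r|, 0 ≤ f x) :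
    ∫⁻ θ in Ioo (-π) π, ENNReal.ofReal (f (circleMap c r θ)) =
      ENNReal.ofReal (2 * π * circleAverage f c r) := by
  have hint : IntervalIntegrable (fun θ ↦ f (circleMap c r θ)) volume (-π) π :=
    ((periodic_circleMap c r).comp f).intervalIntegrable₀ two_pi_pos.ne' hf _ _
  have hpi : -π ≤ π := by linarith [pi_pos]
  have hav : 2 * π * circleAverage f c r = ∫ θ in Ioo (-π) π, f (circleMap c r θ) := by
    rw [circleAverage_eq_integral_add (-π), intervalIntegral.integral_comp_add_right
      (fun θ ↦ f (circleMap c r θ)), smul_eq_mul, ← mul_assoc,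
      mul_inv_cancel₀ two_pi_pos.ne', one_mul, zero_add, show 2 * π + -π = π by ring,
      intervalIntegral.integral_of_le hpi, integral_Ioc_eq_integral_Ioo]
  rw [hav, ofReal_integral_eq_lintegral_ofReal
    ((intervalIntegrable_iff_integrableOn_Ioo_of_le hpi).1 hint)
    (ae_of_all _ fun θ ↦ hf₀ _ (circleMap_mem_sphere' c r θ))]

theorem integral_ball_eq_integral_circleAverage {f : ℂ → ℝ} {R : ℝ} (hf : Measurable f)
    (hf₀ : ∀ ζ ∈ ball (0 : ℂ) R, 0 ≤ f ζ) (hfc : ∀ r ∈ Ioo 0 R, CircleIntegrable f 0 r)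
    (hint : IntegrableOn (fun r ↦ r * circleAverage f 0 r) (Ioo 0 R)) :
    ∫ ζ in ball (0 : ℂ) R, f ζ = 2 * π * ∫ r in Ioo 0 R, r * circleAverage f 0 r := by
  -- Tonelli in `ℝ≥0∞` needs no integrability of `f` on the product `(r, θ)`.
  have hsphere : ∀ r ∈ Ioo 0 R, ∀ x ∈ sphere (0 : ℂ) |r|, 0 ≤ f x := fun r hr x hx ↦
    hf₀ x (sphere_subset_ball (by rw [abs_of_pos hr.1]; exact hr.2) hx)
  have hinner : ∀ r ∈ Ioo 0 R,
      ∫⁻ θ in Ioo (-π) π, ENNReal.ofReal r * ENNReal.ofReal (f (circleMap 0 r θ)) =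
        ENNReal.ofReal (2 * π * (r * circleAverage f 0 r)) := fun r hr ↦ by
    rw [lintegral_const_mul' _ _ ENNReal.ofReal_ne_top,
      lintegral_circleMap_eq_ofReal_circleAverage (hfc r hr) (hsphere r hr),
      ← ENNReal.ofReal_mul hr.1.le]
    ring_nf
  have hrad₀ : ∀ r ∈ Ioo 0 R, 0 ≤ 2 * π * (r * circleAverage f 0 r) := fun r hr ↦
    mul_nonneg two_pi_pos.le (mul_nonneg hr.1.le (circleAverage_nonneg_of_nonneg (hsphere r hr)))
  rw [integral_eq_lintegral_of_nonneg_ae (ae_restrict_of_forall_mem measurableSet_ball hf₀)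
      hf.aestronglyMeasurable, lintegral_ball_eq_lintegral_circleMap hf.ennreal_ofReal,
    setLIntegral_congr_fun measurableSet_Ioo hinner,
    ← ofReal_integral_eq_lintegral_ofReal (hint.const_mul _)
      (ae_restrict_of_forall_mem measurableSet_Ioo hrad₀),
    ENNReal.toReal_ofReal (setIntegral_nonneg measurableSet_Ioo hrad₀), integral_const_mul]

theorem integral_mul_log {a b : ℝ} (ha : 0 ≤ a) (hab : a ≤ b) :
    ∫ x in a..b, x * Real.log x =
      b ^ 2 / 2 * Real.log b - b ^ 2 / 4 - (a ^ 2 / 2 * Real.log a - a ^ 2 / 4) := by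
  have hderiv : ∀ x ∈ Ioo a b,
      HasDerivAt (fun x ↦ x / 2 * (x * Real.log x) - x ^ 2 / 4) (x * Real.log x) x := by
    intro x hx
    refine (((hasDerivAt_id' x).div_const 2).fun_mul
      (hasDerivAt_mul_log (ha.trans_lt hx.1).ne')).fun_sub
      ((hasDerivAt_pow 2 x).div_const 4) |>.congr_deriv ?_
    norm_num
    ring
  have hcont : Continuous fun x ↦ x / 2 * (x * Real.log x) - x ^ 2 / 4 := by
    fun_prop (disch := exact continuous_mul_log)
  rw [intervalIntegral.integral_eq_sub_of_hasDerivAt_of_le hab hcont.continuousOn hderiv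
    (continuous_mul_log.intervalIntegrable _ _)]
  ring

theorem eqOn_mul_log_max_of_le (t : ℝ) :
    EqOn (fun r ↦ r * Real.log (max r t)) (fun r ↦ Real.log t * r) (Iic t) := fun r hr ↦ by
  simp only [max_eq_right (mem_Iic.1 hr), mul_comm]

theorem eqOn_mul_log_max_of_ge (t : ℝ) :
    EqOn (fun r ↦ r * Real.log (max r t)) (fun r ↦ r * Real.log r) (Ici t) := fun r hr ↦ by
  simp only [max_eq_left (mem_Ici.1 hr)]

theorem intervalIntegrable_mul_log_max {t : ℝ} (ht₀ : 0 ≤ t) (ht₁ : t ≤ 1) :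
    IntervalIntegrable (fun r ↦ r * Real.log (max r t)) volume 0 1 := by
  have h₁ : IntervalIntegrable (fun r ↦ r * Real.log (max r t)) volume 0 t :=
    (intervalIntegrable_congr ((eqOn_mul_log_max_of_le t).mono (by
      rw [uIoc_of_le ht₀]; exact Ioc_subset_Iic_self))).2
      ((continuous_const.mul continuous_id).intervalIntegrable _ _)
  have h₂ : IntervalIntegrable (fun r ↦ r * Real.log (max r t)) volume t 1 :=
    (intervalIntegrable_congr ((eqOn_mul_log_max_of_ge t).mono (by
      rw [uIoc_of_le ht₁]; exact Ioc_subset_Ioi_self.trans Ioi_subset_Ici_self))).2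
      (continuous_mul_log.intervalIntegrable _ _)
  exact h₁.trans h₂

theorem integral_mul_log_max {t : ℝ} (ht₀ : 0 ≤ t) (ht₁ : t ≤ 1) :
    ∫ r in (0 : ℝ)..1, r * Real.log (max r t) = (t ^ 2 - 1) / 4 := by
  have h₁ : IntervalIntegrable (fun r ↦ r * Real.log (max r t)) volume 0 t :=
    (intervalIntegrable_mul_log_max ht₀ ht₁).mono_set (by
      rw [uIcc_of_le ht₀, uIcc_of_le zero_le_one]; exact Icc_subset_Icc_right ht₁)
  have h₂ : IntervalIntegrable (fun r ↦ r * Real.log (max r t)) volume t 1 :=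
    (intervalIntegrable_mul_log_max ht₀ ht₁).mono_set (by
      rw [uIcc_of_le ht₁, uIcc_of_le zero_le_one]; exact Icc_subset_Icc_left ht₀)
  rw [← intervalIntegral.integral_add_adjacent_intervals h₁ h₂,
    intervalIntegral.integral_congr ((eqOn_mul_log_max_of_le t).mono (by
      rw [uIcc_of_le ht₀]; exact Icc_subset_Iic_self)),
    intervalIntegral.integral_congr ((eqOn_mul_log_max_of_ge t).mono (by
      rw [uIcc_of_le ht₁]; exact Icc_subset_Ici_self)),
    intervalIntegral.integral_const_mul, integral_id, integral_mul_log ht₀ ht₁, Real.log_one]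
  ring

theorem greenD_nonneg {z ζ : ℂ} (hz : ‖z‖ ≤ 1) (hζ : ‖ζ‖ ≤ 1) : 0 ≤ greenD z ζ := by
  rcases eq_or_ne z ζ with rfl | hne
  · simp [greenD]
  have hpos : 0 < ‖z - ζ‖ := norm_pos_iff.2 (sub_ne_zero.2 hne)
  have hle : ‖z - ζ‖ ≤ ‖1 - z * conj ζ‖ := by
    refine (pow_le_pow_iff_left₀ (norm_nonneg _) (norm_nonneg _) two_ne_zero).1 ?_
    linarith [norm_one_sub_mul_conj_sq_sub_norm_sub_sq z ζ,
      mul_nonneg (sub_nonneg.2 (pow_le_one₀ (n := 2) (norm_nonneg z) hz))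
        (sub_nonneg.2 (pow_le_one₀ (n := 2) (norm_nonneg ζ) hζ))]
  refine mul_nonneg (by positivity) (log_nonneg ?_)
  rw [norm_div]
  exact (one_le_div hpos).2 hle

theorem measurable_greenD (z : ℂ) : Measurable (greenD z) := by
  unfold greenD; fun_prop

theorem greenD_eq_sub_log {z ζ : ℂ} (hζ : ζ ≠ z) (h : 1 - z * conj ζ ≠ 0) :
    greenD z ζ = (2 * π)⁻¹ * (Real.log ‖1 - z * conj ζ‖ - Real.log ‖ζ - z‖) := by
  rw [greenD, one_div, norm_div, log_div (norm_ne_zero_iff.2 h)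
    (norm_ne_zero_iff.2 (sub_ne_zero.2 hζ.symm)), norm_sub_rev z ζ]

theorem greenD_eventuallyEq_sub_log {z : ℂ} {r : ℝ} (h : ‖z‖ * |r| < 1) :
    greenD z =ᶠ[codiscreteWithin (sphere 0 |r|)]
      fun ζ ↦ (2 * π)⁻¹ * (Real.log ‖1 - z * conj ζ‖ - Real.log ‖ζ - z‖) := by
  filter_upwards [self_mem_codiscreteWithin _, compl_singleton_mem_codiscreteWithin z]
    with ζ hζ hζz
  rw [mem_sphere_zero_iff_norm] at hζ
  exact greenD_eq_sub_log hζz (one_sub_mul_conj_ne_zero (hζ ▸ h))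

theorem circleIntegrable_greenD {z : ℂ} {r : ℝ} (h : ‖z‖ * |r| < 1) :
    CircleIntegrable (greenD z) 0 r :=
  (((circleIntegrable_log_norm_one_sub_mul_conj h).sub
    (circleIntegrable_log_norm_sub_const r)).const_smul (a := (2 * π)⁻¹)).congr_codiscreteWithin
    (greenD_eventuallyEq_sub_log h).symm

theorem circleAverage_greenD {z : ℂ} {r : ℝ} (hr : 0 < r) (h : ‖z‖ * r < 1) :
    circleAverage (greenD z) 0 r = -Real.log (max r ‖z‖) / (2 * π) := by
  have h' : ‖z‖ * |r| < 1 := by rwa [abs_of_pos hr]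
  rw [circleAverage_congr_codiscreteWithin (greenD_eventuallyEq_sub_log h') hr.ne']
  simp_rw [← smul_eq_mul (a := (2 * π)⁻¹)]
  rw [circleAverage_fun_smul, circleAverage_fun_sub (circleIntegrable_log_norm_one_sub_mul_conj h')
    (circleIntegrable_log_norm_sub_const r), circleAverage_log_norm_one_sub_mul_conj hr h,
    circleAverage_log_norm_sub_const_eq_log_max hr, zero_sub, zero_sub, norm_neg, smul_eq_mul]
  ring

theorem stmt0 (z : ℂ) (hz : z ∈ Metric.ball (0 : ℂ) 1) :
    ∫ ζ in Metric.ball (0 : ℂ) 1, |greenD z ζ| = (1 - ‖z‖ ^ 2) / 4 := by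
  have hz₁ : ‖z‖ < 1 := mem_ball_zero_iff.1 hz
  have hG₀ : ∀ ζ ∈ ball (0 : ℂ) 1, 0 ≤ greenD z ζ := fun ζ hζ ↦
    greenD_nonneg hz₁.le (mem_ball_zero_iff.1 hζ).le
  have hzr : ∀ r ∈ Ioo (0 : ℝ) 1, ‖z‖ * r < 1 := fun r hr ↦ by
    nlinarith [norm_nonneg z, hr.1, hr.2]
  have hav : EqOn (fun r ↦ r * circleAverage (greenD z) 0 r)
      (fun r ↦ -(2 * π)⁻¹ * (r * Real.log (max r ‖z‖))) (Ioo 0 1) := fun r hr ↦ by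
    simp only [circleAverage_greenD hr.1 (hzr r hr)]
    ring
  have hrad := intervalIntegrable_mul_log_max (norm_nonneg z) hz₁.le
  rw [intervalIntegrable_iff_integrableOn_Ioo_of_le zero_le_one] at hrad
  rw [setIntegral_congr_fun measurableSet_ball fun ζ hζ ↦ abs_of_nonneg (hG₀ ζ hζ),
    integral_ball_eq_integral_circleAverage (measurable_greenD z) hG₀
      (fun r hr ↦ circleIntegrable_greenD (by rw [abs_of_pos hr.1]; exact hzr r hr))
      (IntegrableOn.congr_fun (hrad.const_mul _) hav.symm measurableSet_Ioo),
    setIntegral_congr_fun measurableSet_Ioo hav, integral_const_mul,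
    ← integral_Ioc_eq_integral_Ioo, ← intervalIntegral.integral_of_le zero_le_one,
    integral_mul_log_max (norm_nonneg z) hz₁.le]
  field_simp
  ring
end

section
/- For every z in the open unit disk and every α > 0, (1/(2π)) ∫₀^{2π} dθ / |1 - z e^{iθ}|^{2α} = Σ_{k=0}^∞ (Γ(k+α)/(k!·Γ(α)))² |z|^{2k}. -/
/-!
For `|w| < 1` the binomial series gives `(1 - w)^(-α) = ∑ cₖ wᵏ` with
`cₖ = Γ(k + α) / (k! Γ(α))`. Taking `w = z e^{iθ}`, the integrand `|1 - z e^{iθ}|^(-2α)` is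
`|∑ cₖ zᵏ e^{ikθ}|²`, and since the coefficients are absolutely summable, integrating the
product of the series against its conjugate term by term (orthogonality of the `e^{ikθ}`)
gives Parseval's identity `(1/2π) ∫ |∑ aₖ e^{ikθ}|² = ∑ |aₖ|²` with `aₖ = cₖ zᵏ`.
-/

open Complex ComplexConjugate
open scoped Real Nat

theorem Ring.choose_add_natCast_sub_one_eq_Gamma_div {a : ℂ} (ha : ∀ k : ℕ, a ≠ -k) (n : ℕ) :
    Ring.choose (a + n - 1) n = Gamma (n + a) / (n ! * Gamma a) := by
  rw [Ring.choose_eq_smul, Polynomial.descPochhammer_smeval_eq_ascPochhammer,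
    Polynomial.ascPochhammer_smeval_eq_eval, show a + n - 1 - n + 1 = a by ring,
    ← Gamma_add_nat_div_Gamma_eq a ha, smul_eq_mul, add_comm, div_mul_eq_div_div, inv_mul_eq_div,
    div_right_comm]

theorem hasFPowerSeriesOnBall_one_sub_cpow_neg {a : ℂ} (ha : ∀ k : ℕ, a ≠ -k) :
    HasFPowerSeriesOnBall (fun w ↦ (1 - w) ^ (-a))
      (.ofScalars ℂ fun n : ℕ ↦ Gamma (n + a) / (n ! * Gamma a)) 0 1 := by
  simpa [← cpow_neg, Ring.choose_add_natCast_sub_one_eq_Gamma_div ha] using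
    one_div_one_sub_cpow_hasFPowerSeriesOnBall_zero a

theorem mem_eball_zero_one_of_norm_lt_one {w : ℂ} (hw : ‖w‖ < 1) : w ∈ Metric.eball (0 : ℂ) 1 := by
  simpa only [Metric.mem_eball, edist_dist, dist_zero_right, ENNReal.ofReal_lt_one] using hw

theorem hasSum_Gamma_div_mul_pow {a : ℂ} (ha : ∀ k : ℕ, a ≠ -k) {w : ℂ} (hw : ‖w‖ < 1) :
    HasSum (fun n : ℕ ↦ Gamma (n + a) / (n ! * Gamma a) * w ^ n) ((1 - w) ^ (-a)) := by
  simpa only [FormalMultilinearSeries.ofScalars_apply_eq, smul_eq_mul, zero_add] using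
    (hasFPowerSeriesOnBall_one_sub_cpow_neg ha).hasSum (mem_eball_zero_one_of_norm_lt_one hw)

theorem summable_norm_Gamma_div_mul_pow {a : ℂ} (ha : ∀ k : ℕ, a ≠ -k) {w : ℂ} (hw : ‖w‖ < 1) :
    Summable fun n : ℕ ↦ ‖Gamma (n + a) / (n ! * Gamma a) * w ^ n‖ := by
  have hradius := (hasFPowerSeriesOnBall_one_sub_cpow_neg ha).r_le
  simpa only [FormalMultilinearSeries.ofScalars_apply_eq, smul_eq_mul] using
    FormalMultilinearSeries.summable_norm_apply _
      (Metric.eball_subset_eball hradius (mem_eball_zero_one_of_norm_lt_one hw))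

theorem integral_exp_int_mul_mul_I (n : ℤ) :
    ∫ θ in (0 : ℝ)..2 * π, exp (n * θ * I) = if n = 0 then (2 * π : ℂ) else 0 := by
  split_ifs with hn
  · simp [hn]
  have hc : (n : ℂ) * I ≠ 0 := mul_ne_zero (by exact_mod_cast hn) I_ne_zero
  simp_rw [mul_right_comm _ _ I]
  rw [integral_exp_mul_complex hc]
  push_cast
  rw [show (n : ℂ) * I * (2 * π) = n * (2 * π * I) by ring, exp_int_mul_two_pi_mul_I]
  simp

theorem hasSum_intervalIntegral_of_norm_le {ι E : Type*} [Countable ι] [NormedAddCommGroup E]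
    [NormedSpace ℝ E] [CompleteSpace E] {a b : ℝ} {F : ι → ℝ → E} (hF : ∀ i, Continuous (F i))
    {u : ι → ℝ} (hu : Summable u) (hFu : ∀ i t, ‖F i t‖ ≤ u i) :
    HasSum (fun i ↦ ∫ t in a..b, F i t) (∫ t in a..b, ∑' i, F i t) :=
  intervalIntegral.hasSum_integral_of_dominated_convergence (fun i _ ↦ u i)
    (fun i ↦ (hF i).aestronglyMeasurable) (fun i ↦ .of_forall fun t _ ↦ hFu i t)
    (.of_forall fun _ _ ↦ hu) intervalIntegrable_const
    (.of_forall fun t _ ↦ (Summable.of_norm_bounded hu (hFu · t)).hasSum)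

theorem norm_mul_exp_intCast_mul_I (c : ℂ) (n : ℤ) (θ : ℝ) : ‖c * exp (n * θ * I)‖ = ‖c‖ := by
  simp [norm_exp]

theorem norm_mul_exp_natCast_mul_I (c : ℂ) (n : ℕ) (θ : ℝ) : ‖c * exp (n * θ * I)‖ = ‖c‖ := by
  exact_mod_cast norm_mul_exp_intCast_mul_I c n θ

section

variable {a : ℕ → ℂ} (ha : Summable (‖a ·‖))
include ha

theorem continuous_tsum_mul_exp : Continuous fun θ : ℝ ↦ ∑' k, a k * exp (k * θ * I) :=
  continuous_tsum (fun k ↦ by fun_prop) ha fun k θ ↦ (norm_mul_exp_natCast_mul_I _ _ _).le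

theorem norm_tsum_mul_exp_le (θ : ℝ) : ‖∑' k, a k * exp (k * θ * I)‖ ≤ ∑' k, ‖a k‖ := by
  simpa only [norm_mul_exp_natCast_mul_I] using
    norm_tsum_le_tsum_norm (ha.congr fun k ↦ (norm_mul_exp_natCast_mul_I (a k) k θ).symm)

theorem integral_exp_neg_mul_tsum_mul_exp (j : ℕ) :
    ∫ θ in (0 : ℝ)..2 * π, exp (-(j * θ * I)) * ∑' k, a k * exp (k * θ * I) = 2 * π * a j := by
  have hprod (k : ℕ) (θ : ℝ) : exp (-(j * θ * I)) * (a k * exp (k * θ * I)) =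
      a k * exp (((k - j : ℤ) : ℂ) * θ * I) := by
    rw [mul_left_comm, ← exp_add]; push_cast; ring_nf
  simp_rw [← tsum_mul_left, hprod]
  rw [← (hasSum_intervalIntegral_of_norm_le (fun k ↦ by fun_prop) ha
    fun k θ ↦ (norm_mul_exp_intCast_mul_I _ _ _).le).tsum_eq]
  simp_rw [intervalIntegral.integral_const_mul, integral_exp_int_mul_mul_I, sub_eq_zero,
    Nat.cast_inj, mul_ite, mul_zero]
  rw [tsum_ite_eq, mul_comm]

theorem integral_norm_tsum_mul_exp_sq :
    ∫ θ in (0 : ℝ)..2 * π, ‖∑' k, a k * exp (k * θ * I)‖ ^ 2 = 2 * π * ∑' k, ‖a k‖ ^ 2 := by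
  have hsq (θ : ℝ) : ((‖∑' k, a k * exp (k * θ * I)‖ ^ 2 : ℝ) : ℂ) =
      ∑' j, conj (a j) * (exp (-(j * θ * I)) * ∑' k, a k * exp (k * θ * I)) := by
    rw [ofReal_pow, ← mul_conj', mul_comm, conj_tsum, ← tsum_mul_right]
    congr 1 with j
    rw [map_mul, ← exp_conj]
    simp only [map_mul, conj_natCast, conj_ofReal, conj_I]
    ring_nf
  apply ofReal_injective
  rw [← intervalIntegral.integral_ofReal]
  simp_rw [hsq]
  have hbound (j : ℕ) (θ : ℝ) :
      ‖conj (a j) * (exp (-(j * θ * I)) * ∑' k, a k * exp (k * θ * I))‖ ≤ ‖a j‖ * ∑' k, ‖a k‖ := by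
    have hexp : ‖exp (-(j * θ * I))‖ = 1 := by simp [norm_exp]
    rw [norm_mul, RCLike.norm_conj, norm_mul, hexp, one_mul]
    gcongr
    exact norm_tsum_mul_exp_le ha θ
  have hcont := continuous_tsum_mul_exp ha
  rw [← (hasSum_intervalIntegral_of_norm_le (fun j ↦ by fun_prop)
    (ha.mul_right _) hbound).tsum_eq]
  simp_rw [intervalIntegral.integral_const_mul, integral_exp_neg_mul_tsum_mul_exp ha,
    mul_left_comm _ (2 * π : ℂ), conj_mul']
  push_cast
  rw [tsum_mul_left]
end

theorem norm_cpow_neg_ofReal_sq (w : ℂ) (α : ℝ) : ‖w ^ (-(α : ℂ))‖ ^ 2 = 1 / ‖w‖ ^ (2 * α) := by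
  rw [← ofReal_neg, norm_cpow_real, ← Real.rpow_natCast, ← Real.rpow_mul (norm_nonneg _),
    show -α * ((2 : ℕ) : ℝ) = -(2 * α) by push_cast; ring, Real.rpow_neg (norm_nonneg _), one_div]

theorem stmt2 (z : ℂ) (hz : z ∈ Metric.ball (0 : ℂ) 1) (α : ℝ) (hα : 0 < α) :
    (1 / (2 * Real.pi)) * ∫ θ in (0:ℝ)..(2 * Real.pi),
        1 / ‖1 - z * Complex.exp (θ * Complex.I)‖ ^ (2 * α)
      = ∑' k : ℕ, (Real.Gamma (k + α) / (Nat.factorial k * Real.Gamma α)) ^ 2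
          * ‖z‖ ^ (2 * k) := by
  have hz1 : ‖z‖ < 1 := by simpa using hz
  have hα' (k : ℕ) : (α : ℂ) ≠ -k := by
    rw [← ofReal_natCast, ← ofReal_neg, Ne, ofReal_inj]
    exact ((neg_nonpos.2 k.cast_nonneg).trans_lt hα).ne'
  set c : ℕ → ℂ := fun k ↦ Gamma (k + α) / (k ! * Gamma α) * z ^ k
  have hc : Summable (‖c ·‖) := summable_norm_Gamma_div_mul_pow hα' hz1
  have hpt (θ : ℝ) :
      1 / ‖1 - z * exp (θ * I)‖ ^ (2 * α) = ‖∑' k, c k * exp (k * θ * I)‖ ^ 2 := by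
    have hw : ‖z * exp (θ * I)‖ < 1 := by simpa [norm_exp] using hz1
    rw [← norm_cpow_neg_ofReal_sq, ← (hasSum_Gamma_div_mul_pow hα' hw).tsum_eq]
    congr 2
    refine tsum_congr fun k ↦ ?_
    rw [mul_pow, ← exp_nat_mul, ← mul_assoc, mul_assoc (k : ℂ)]
  have hnorm (k : ℕ) :
      ‖c k‖ ^ 2 = (Real.Gamma (k + α) / (k ! * Real.Gamma α)) ^ 2 * ‖z‖ ^ (2 * k) := by
    have hΓ : Gamma (k + α) / (k ! * Gamma α) =
        (Real.Gamma (k + α) / (k ! * Real.Gamma α) : ℝ) := by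
      push_cast [← Gamma_ofReal]; rfl
    rw [show c k = Gamma (k + α) / (k ! * Gamma α) * z ^ k from rfl, hΓ, norm_mul, norm_real,
      norm_pow, mul_pow, Real.norm_eq_abs, sq_abs, ← pow_mul, mul_comm k]
  simp_rw [hpt, integral_norm_tsum_mul_exp_sq hc, hnorm]
  rw [one_div, inv_mul_cancel_left₀ Real.two_pi_pos.ne']
end

section
/- For every nonnegative integer j, ∫₀¹ r^{2j - 1/2} (1 - r²)^{3/2} dr ≤ (3π/2) · 1/((2j + 5/2)(2j + 1/2)) · (2j+1)!!/(2j+2)!!. -/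
open Real Set Nat MeasureTheory intervalIntegral


lemma realBeta (a b : ℝ) (ha : 0 < a) (hb : 0 < b) :
    ∫ x in (0:ℝ)..1, x ^ (a - 1) * (1 - x) ^ (b - 1)
      = Real.Gamma a * Real.Gamma b / Real.Gamma (a + b) := by
  have key : Complex.Gamma a * Complex.Gamma b
      = Complex.Gamma (a + b) * Complex.betaIntegral a b :=
    Complex.Gamma_mul_Gamma_eq_betaIntegral (by simpa using ha) (by simpa using hb)
  have h1 : Complex.betaIntegral a b
      = ((∫ x in (0:ℝ)..1, x ^ (a - 1) * (1 - x) ^ (b - 1) : ℝ) : ℂ) := by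
    rw [Complex.betaIntegral, ← intervalIntegral.integral_ofReal]
    apply intervalIntegral.integral_congr
    intro x hx
    rw [Set.uIcc_of_le (by norm_num : (0:ℝ) ≤ 1)] at hx
    simp only [Complex.ofReal_mul,
      Complex.ofReal_cpow hx.1, Complex.ofReal_cpow (by linarith [hx.2] : (0:ℝ) ≤ 1 - x)]
    push_cast
    ring
  rw [h1, ← Complex.ofReal_add, Complex.Gamma_ofReal, Complex.Gamma_ofReal,
    Complex.Gamma_ofReal, ← Complex.ofReal_mul, ← Complex.ofReal_mul] at key
  have h2 : Real.Gamma a * Real.Gamma b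
      = Real.Gamma (a+b) * ∫ x in (0:ℝ)..1, x ^ (a - 1) * (1 - x) ^ (b - 1) :=
    mod_cast key
  have hpos : Real.Gamma (a + b) ≠ 0 := (Real.Gamma_pos_of_pos (by linarith)).ne'
  field_simp
  linarith [h2]


lemma ne0 (j : ℕ) : 2*(j:ℝ) - 1/2 ≠ 0 := by
  rcases Nat.eq_zero_or_pos j with h|h
  · simp [h]
  · have : (1:ℝ) ≤ j := by exact_mod_cast h
    intro hc; linarith

lemma pow_id (j : ℕ) {x : ℝ} (hx : 0 ≤ x) :
    x ^ (2*(j:ℝ) - 1/2) = x * (x^2) ^ ((j:ℝ) - 3/4) := by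
  rcases eq_or_lt_of_le hx with h | h
  · rw [← h, Real.zero_rpow (ne0 j)]
    simp
  · rw [← Real.rpow_natCast x 2, ← Real.rpow_mul h.le,
      ← Real.rpow_one_add' h.le
        (by intro hc; exact ne0 j (by push_cast at hc ⊢; linarith) : 1 + (2:ℕ)*((j:ℝ)-3/4) ≠ 0)]
    congr 1
    push_cast; ring

lemma integ_aux (c : ℝ) (hc : -1 < c) :
    IntervalIntegrable (fun t : ℝ => t ^ c * (1 - t) ^ ((3:ℝ)/2)) volume 0 1 := by
  apply IntervalIntegrable.mul_continuousOn (intervalIntegrable_rpow' hc)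
  apply ContinuousOn.rpow_const
  · fun_prop
  · intro x _; right; norm_num

lemma integ_aux2 (j : ℕ) :
    IntervalIntegrable (fun x : ℝ => x ^ (2*(j:ℝ)-1/2) * (1 - x^2) ^ ((3:ℝ)/2)) volume 0 1 := by
  apply IntervalIntegrable.mul_continuousOn
  · refine intervalIntegrable_rpow' ?_
    have : (0:ℝ) ≤ (j:ℝ) := Nat.cast_nonneg j
    linarith
  · apply ContinuousOn.rpow_const
    · fun_prop
    · intro x _; right; norm_num

lemma subst_eval (j : ℕ) :
    (∫ r in (0:ℝ)..1, r ^ (2*(j:ℝ) - 1/2) * (1 - r^2) ^ ((3:ℝ)/2))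
      = (1/2) * ∫ t in (0:ℝ)..1, t ^ ((j:ℝ) - 3/4) * (1 - t) ^ ((3:ℝ)/2) := by
  set g : ℝ → ℝ := fun t => t ^ ((j:ℝ) - 3/4) * (1-t)^((3:ℝ)/2) with hg
  have hj : (0:ℝ) ≤ (j:ℝ) := Nat.cast_nonneg j
  have hexp : (-1:ℝ) < (j:ℝ) - 3/4 := by linarith
  have himg : (fun x : ℝ => x^2) '' Icc 0 1 ⊆ Icc 0 1 := by
    rintro _ ⟨x, hx, rfl⟩
    simp only [Set.mem_Icc] at *
    exact ⟨by positivity, by nlinarith [hx.1, hx.2]⟩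
  have hf : ContinuousOn (fun x : ℝ => x^2) (Set.uIcc 0 1) := by fun_prop
  have hff' : ∀ x ∈ Ioo (min (0:ℝ) 1) (max 0 1),
      HasDerivWithinAt (fun x : ℝ => x^2) (2*x) (Ioi x) x := by
    intro x _
    simpa using (hasDerivAt_pow 2 x).hasDerivWithinAt (s := Ioi x)
  have hgc : ContinuousOn g ((fun x : ℝ => x^2) '' Ioo (min (0:ℝ) 1) (max 0 1)) := by
    have h1 : (fun x : ℝ => x^2) '' Ioo (min (0:ℝ) 1) (max 0 1) ⊆ Ioo 0 1 := by
      rintro _ ⟨x, hx, rfl⟩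
      simp only [min_self, zero_le_one, max_eq_right, min_eq_left, Set.mem_Ioo] at *
      exact ⟨pow_pos hx.1 2, by nlinarith [hx.1, hx.2]⟩
    apply ContinuousOn.mono _ h1
    apply ContinuousOn.mul
    · apply ContinuousOn.rpow_const continuousOn_id
      intro x hx; left; exact ne_of_gt hx.1
    · apply ContinuousOn.rpow_const (by fun_prop)
      intro x _; right; norm_num
  have hsub : (fun x : ℝ => x^2) '' (Set.uIcc (0:ℝ) 1) ⊆ Icc 0 1 := by
    rw [Set.uIcc_of_le zero_le_one]; exact himg
  have hg1 : IntegrableOn g ((fun x : ℝ => x^2) '' (Set.uIcc (0:ℝ) 1)) volume :=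
    ((intervalIntegrable_iff_integrableOn_Icc_of_le zero_le_one).mp
      (integ_aux ((j:ℝ) - 3/4) hexp)).mono_set hsub
  have hg2 : IntegrableOn (fun x : ℝ => (2*x) • (g ∘ (fun x : ℝ => x^2)) x)
      (Set.uIcc (0:ℝ) 1) volume := by
    rw [Set.uIcc_of_le zero_le_one]
    have heq : Set.EqOn (fun x : ℝ => (2*x) • (g ∘ (fun x : ℝ => x^2)) x)
        (fun x : ℝ => 2 * (x ^ (2*(j:ℝ)-1/2) * (1 - x^2) ^ ((3:ℝ)/2))) (Icc 0 1) := by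
      intro x hx
      simp only [Function.comp, smul_eq_mul, hg]
      rw [pow_id j hx.1]
      ring
    refine MeasureTheory.IntegrableOn.congr_fun ?_ heq.symm measurableSet_Icc
    exact (intervalIntegrable_iff_integrableOn_Icc_of_le zero_le_one).mp
      ((integ_aux2 j).const_mul 2)
  have main := intervalIntegral.integral_comp_smul_deriv''' hf hff' hgc hg1 hg2
  simp only [one_pow, ne_eq, OfNat.ofNat_ne_zero, not_false_eq_true, zero_pow] at main
  rw [← main, ← intervalIntegral.integral_const_mul]
  apply intervalIntegral.integral_congr
  intro x hx
  rw [Set.uIcc_of_le zero_le_one] at hx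
  simp only [Function.comp, smul_eq_mul, hg]
  rw [pow_id j hx.1]
  ring


lemma gamma_half : ∀ n : ℕ, Real.Gamma ((n:ℝ) + 1/2)
    = Real.sqrt π * (2*n)! / (4^n * n !)
  | 0 => by
    rw [show ((0:ℕ):ℝ) + 1/2 = 1/2 by norm_num, Real.Gamma_one_half_eq]
    norm_num
  | (n+1) => by
    have h : ((n+1:ℕ):ℝ) + 1/2 = ((n:ℝ)+1/2) + 1 := by push_cast; ring
    have hne : (n:ℝ) + 1/2 ≠ 0 := by positivity
    rw [h, Real.Gamma_add_one hne, gamma_half n]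
    have e1 : (2*(n+1)) ! = (2*n+2) * ((2*n+1) * (2*n)!) := by
      have : 2*(n+1) = (2*n+1)+1 := by ring
      rw [this, Nat.factorial_succ, Nat.factorial_succ]
    have e2 : (n+1)! = (n+1) * n ! := Nat.factorial_succ n
    rw [e1, e2]
    have h4 : (4:ℝ)^n ≠ 0 := by positivity
    have hf : ((n !:ℕ):ℝ) ≠ 0 := by exact_mod_cast (Nat.factorial_pos n).ne'
    push_cast
    field_simp
    ring

lemma gamma_key {x : ℝ} (hx : 0 < x) :
    Real.Gamma (x+3/4) * Real.Gamma (x+1/2) ≤ Real.Gamma (x+5/4) * Real.Gamma x := by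
  have h := Real.convexOn_log_Gamma
  have hx5 : (0:ℝ) < x + 5/4 := by linarith
  have h1 := h.2 (mem_Ioi.mpr hx) (mem_Ioi.mpr hx5)
    (by norm_num : (0:ℝ) ≤ 3/5) (by norm_num : (0:ℝ) ≤ 2/5) (by norm_num)
  have h2 := h.2 (mem_Ioi.mpr hx) (mem_Ioi.mpr hx5)
    (by norm_num : (0:ℝ) ≤ 2/5) (by norm_num : (0:ℝ) ≤ 3/5) (by norm_num)
  simp only [smul_eq_mul, Function.comp] at h1 h2
  have e1 : 3/5*x + 2/5*(x+5/4) = x + 1/2 := by ring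
  have e2 : 2/5*x + 3/5*(x+5/4) = x + 3/4 := by ring
  rw [e1] at h1
  rw [e2] at h2
  have p0 : 0 < Real.Gamma x := Real.Gamma_pos_of_pos hx
  have p1 : 0 < Real.Gamma (x+1/2) := Real.Gamma_pos_of_pos (by linarith)
  have p2 : 0 < Real.Gamma (x+3/4) := Real.Gamma_pos_of_pos (by linarith)
  have p3 : 0 < Real.Gamma (x+5/4) := Real.Gamma_pos_of_pos hx5
  have hsum : Real.log (Real.Gamma (x+3/4)) + Real.log (Real.Gamma (x+1/2))
      ≤ Real.log (Real.Gamma (x+5/4)) + Real.log (Real.Gamma x) := by linarith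
  have := Real.exp_le_exp.mpr hsum
  rwa [Real.exp_add, Real.exp_add, Real.exp_log p2, Real.exp_log p1,
    Real.exp_log p3, Real.exp_log p0] at this
variable (j : ℕ)


-- step: double factorial ratio = Gamma ratio
lemma dfac_eq (j : ℕ) :
    ((Nat.doubleFactorial (2*j+1) : ℝ)) / ((Nat.doubleFactorial (2*j+2) : ℝ))
      = Real.Gamma ((j:ℝ)+3/2) / (Real.sqrt π * Real.Gamma ((j:ℝ)+2)) := by
  have gn : Real.Gamma ((j:ℝ)+2) = (j+1)! := by
    rw [show (j:ℝ)+2 = ((j+1:ℕ):ℝ)+1 by push_cast; ring, Real.Gamma_nat_eq_factorial]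
  have gh : Real.Gamma ((j:ℝ)+3/2) = Real.sqrt π * (2*j+2)! / (4^(j+1) * (j+1)!) := by
    have := gamma_half (j+1)
    rw [show (((j+1:ℕ)):ℝ)+1/2 = (j:ℝ)+3/2 by push_cast; ring,
      show 2*(j+1) = 2*j+2 by ring] at this
    exact this
  have d1 : Nat.doubleFactorial (2*j+2) = 2^(j+1) * (j+1)! := by
    have := Nat.doubleFactorial_two_mul (j+1)
    rwa [show 2*(j+1) = 2*j+2 by ring] at this
  have d2 : (2*j+2)! = Nat.doubleFactorial (2*j+2) * Nat.doubleFactorial (2*j+1) := by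
    have := Nat.factorial_eq_mul_doubleFactorial (2*j+1)
    rwa [show 2*j+1+1 = 2*j+2 by ring] at this
  have hsq : (0:ℝ) < Real.sqrt π := Real.sqrt_pos.mpr Real.pi_pos
  have hfne : (((j+1)! : ℕ):ℝ) ≠ 0 := by exact_mod_cast (Nat.factorial_pos (j+1)).ne'
  have hdne : ((Nat.doubleFactorial (2*j+2) : ℕ):ℝ) ≠ 0 := by
    exact_mod_cast (Nat.doubleFactorial_pos (2*j+2)).ne'
  have h2ne : ((2:ℝ))^(j+1) ≠ 0 := by positivity
  rw [gh, gn]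
  have d2R : ((2*j+2)! : ℝ)
      = ((Nat.doubleFactorial (2*j+2) : ℕ):ℝ) * ((Nat.doubleFactorial (2*j+1) : ℕ):ℝ) := by
    exact_mod_cast congrArg (Nat.cast (R := ℝ)) d2
  have d1R : ((Nat.doubleFactorial (2*j+2) : ℕ):ℝ) = 2^(j+1) * (((j+1)! : ℕ):ℝ) := by
    exact_mod_cast congrArg (Nat.cast (R := ℝ)) d1
  have h4 : (4:ℝ)^(j+1) = 2^(j+1) * 2^(j+1) := by
    rw [show (4:ℝ) = 2*2 by norm_num, mul_pow]
  rw [d2R, d1R, h4]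
  field_simp

lemma gamma_key2 (j : ℕ) :
    Real.Gamma ((j:ℝ)+9/4) * Real.Gamma ((j:ℝ)+2)
      ≤ Real.Gamma ((j:ℝ)+11/4) * Real.Gamma ((j:ℝ)+3/2) := by
  have hx : (0:ℝ) < (j:ℝ)+3/2 := by positivity
  have := gamma_key hx
  rw [show (j:ℝ)+3/2+3/4 = (j:ℝ)+9/4 by ring, show (j:ℝ)+3/2+1/2 = (j:ℝ)+2 by ring,
    show (j:ℝ)+3/2+5/4 = (j:ℝ)+11/4 by ring] at this
  exact this


theorem stmt10 (j : ℕ) :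
    (∫ r in (0:ℝ)..1, r ^ (2 * (j : ℝ) - 1 / 2) * (1 - r ^ 2) ^ ((3 : ℝ) / 2))
      ≤ (3 * Real.pi / 2) * (1 / ((2 * (j : ℝ) + 5 / 2) * (2 * (j : ℝ) + 1 / 2)))
          * ((Nat.doubleFactorial (2 * j + 1) : ℝ) / (Nat.doubleFactorial (2 * j + 2) : ℝ)) := by
  have hbeta := realBeta ((j:ℝ)+1/4) (5/2) (by positivity) (by norm_num)
  rw [show (j:ℝ)+1/4-1 = (j:ℝ)-3/4 by ring, show (5:ℝ)/2-1 = 3/2 by norm_num,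
      show (j:ℝ)+1/4+5/2 = (j:ℝ)+11/4 by ring] at hbeta
  have g52 : Real.Gamma ((5:ℝ)/2) = 3/4 * Real.sqrt π := by
    rw [show (5:ℝ)/2 = (3/2) + 1 by norm_num, Real.Gamma_add_one (by norm_num),
      show (3:ℝ)/2 = (1/2)+1 by norm_num, Real.Gamma_add_one (by norm_num),
      Real.Gamma_one_half_eq]
    ring
  rw [subst_eval j, hbeta, dfac_eq j, g52]
  set s : ℝ := Real.sqrt π with hs
  have hspos : (0:ℝ) < s := Real.sqrt_pos.mpr Real.pi_pos
  have hss : s * s = π := Real.mul_self_sqrt Real.pi_pos.le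
  have p1 : 0 < Real.Gamma ((j:ℝ)+1/4) := Real.Gamma_pos_of_pos (by positivity)
  have p2 : 0 < Real.Gamma ((j:ℝ)+11/4) := Real.Gamma_pos_of_pos (by positivity)
  have p3 : 0 < Real.Gamma ((j:ℝ)+3/2) := Real.Gamma_pos_of_pos (by positivity)
  have p4 : 0 < Real.Gamma ((j:ℝ)+2) := Real.Gamma_pos_of_pos (by positivity)
  have hc : (0:ℝ) < (2*(j:ℝ)+5/2)*(2*(j:ℝ)+1/2) := by positivity
  have r1 : Real.Gamma ((j:ℝ)+5/4) = ((j:ℝ)+1/4) * Real.Gamma ((j:ℝ)+1/4) := by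
    have := Real.Gamma_add_one (s := (j:ℝ)+1/4) (by positivity)
    rwa [show (j:ℝ)+1/4+1 = (j:ℝ)+5/4 by ring] at this
  have r2 : Real.Gamma ((j:ℝ)+9/4) = ((j:ℝ)+5/4) * Real.Gamma ((j:ℝ)+5/4) := by
    have := Real.Gamma_add_one (s := (j:ℝ)+5/4) (by positivity)
    rwa [show (j:ℝ)+5/4+1 = (j:ℝ)+9/4 by ring] at this
  have key2 := gamma_key2 j
  rw [r2, r1] at key2
  have L : 1/2 * (Real.Gamma ((j:ℝ)+1/4) * (3/4*s) / Real.Gamma ((j:ℝ)+11/4))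
      = (3*s*Real.Gamma ((j:ℝ)+1/4)) / (8*Real.Gamma ((j:ℝ)+11/4)) := by
    field_simp
    ring
  have R : 3 * π / 2 * (1 / ((2*(j:ℝ)+5/2)*(2*(j:ℝ)+1/2)))
        * (Real.Gamma ((j:ℝ)+3/2) / (s * Real.Gamma ((j:ℝ)+2)))
      = (3*s*Real.Gamma ((j:ℝ)+3/2))
        / (2*((2*(j:ℝ)+5/2)*(2*(j:ℝ)+1/2))*Real.Gamma ((j:ℝ)+2)) := by
    rw [← hss]
    field_simp
  rw [L, R, div_le_div_iff₀ (by positivity) (by positivity)]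
  nlinarith [mul_le_mul_of_nonneg_left key2 (show (0:ℝ) ≤ 24*s by positivity)]
end

section
/- For every z in the open unit disk, ∫_𝔻 |∂_z G(z, ξ)|^{3/2} dσ(ξ) < 6π/5, where ∂_z G(z,ξ) denotes the partial derivative in z of the Green function G of the unit disk, satisfying |∂_z G(z,ξ)| = (1/(4π))·(1 - |ξ|²)/(|1 - z·conj(ξ)|·|z - ξ|). -/
/-!
Since `|1 - z ξ̄| ≥ 1 - |ξ| ≥ (1 - |ξ|²) / 2`, one has `|∂_z G(z, ξ)| ≤ 1 / (2π |ξ - z|)`, so for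
`1 ≤ q < 2` the integrand `|∂_z G|^q` is at most `(2π)⁻¹ |ξ - z|^(-q)`. Enlarging the unit disk to
the disk of radius `2` about `z` and integrating in polar coordinates bounds the integral by
`2^(2-q) / (2-q)`, which is `2√2 < 6π/5` for `q = 3/2`.
-/

open MeasureTheory Complex

namespace MeasureTheory
open Metric Set Module

variable {E : Type*} [NormedAddCommGroup E] [NormedSpace ℝ E] [FiniteDimensional ℝ E]
  [Nontrivial E] [MeasurableSpace E] [BorelSpace E] (μ : Measure E) [μ.IsAddHaarMeasure]

theorem integrableOn_ball_norm_sub_rpow (z : E) (r : ℝ) {p : ℝ} (hp : -(finrank ℝ E : ℝ) < p) :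
    IntegrableOn (fun x ↦ ‖x - z‖ ^ p) (ball z r) μ := by
  have hball : (· - z) ⁻¹' ball 0 r = ball z r := by ext; simp [dist_eq_norm]
  rw [← hball, ← Function.comp_def (fun x : E ↦ ‖x‖ ^ p),
    (measurePreserving_sub_right μ z).integrableOn_comp_preimage (measurableEmbedding_subRight z)]
  refine integrableOn_ball_of_norm_le_rpow (C := 1) (α := -p) finrank_pos (by linarith)
    (.of_forall fun x ↦ ?_) (measurable_norm.pow_const p).aestronglyMeasurable
  simp [Real.norm_eq_abs, abs_of_nonneg (Real.rpow_nonneg (norm_nonneg x) p)]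

theorem setIntegral_ball_norm_sub_rpow (z : E) {r p : ℝ} (hr : 0 ≤ r)
    (hp : -(finrank ℝ E : ℝ) < p) :
    ∫ x in ball z r, ‖x - z‖ ^ p ∂μ =
      finrank ℝ E * μ.real (ball 0 1) * (r ^ (finrank ℝ E + p) / (finrank ℝ E + p)) := by
  have hball : (· - z) ⁻¹' ball 0 r = ball z r := by ext; simp [dist_eq_norm]
  have hind : (ball (0 : E) r).indicator (fun x ↦ ‖x‖ ^ p) =
      fun x ↦ (Iio r).indicator (fun y ↦ y ^ p) ‖x‖ := by
    ext x; simp [indicator, mem_ball]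
  have hrad : ∫ y in Ioi (0 : ℝ), y ^ (finrank ℝ E - 1) • (Iio r).indicator (fun y ↦ y ^ p) y
      = ∫ y in (0 : ℝ)..r, y ^ (finrank ℝ E - 1 + p) := by
    rw [intervalIntegral.integral_of_le hr, integral_Ioc_eq_integral_Ioo, ← Ioi_inter_Iio,
      ← setIntegral_indicator measurableSet_Iio]
    refine setIntegral_congr_fun measurableSet_Ioi fun y (hy : 0 < y) ↦ ?_
    by_cases hyr : y < r
    · simp [hyr, Real.rpow_add hy, ← Real.rpow_natCast, Nat.cast_sub finrank_pos]
    · simp [hyr]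
  rw [← hball, (measurePreserving_sub_right μ z).setIntegral_preimage_emb
    (measurableEmbedding_subRight z) (fun x ↦ ‖x‖ ^ p), ← integral_indicator measurableSet_ball,
    hind, integral_fun_norm_addHaar, nsmul_eq_mul, smul_eq_mul, hrad,
    integral_rpow (Or.inl (by linarith)), mul_assoc]
  congr 2
  have hn : (finrank ℝ E : ℝ) - 1 + p + 1 = finrank ℝ E + p := by ring
  rw [hn, Real.zero_rpow (by linarith), sub_zero]

end MeasureTheory

open ComplexConjugate Metric Set

/-- `|∂_z G(z, ξ)|` for the Green function `G` of the unit disk. -/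
noncomputable def greenGradNorm (z ξ : ℂ) : ℝ :=
  (1 / (4 * Real.pi)) * (1 - ‖ξ‖ ^ 2) / (‖1 - z * conj ξ‖ * ‖z - ξ‖)

theorem one_sub_norm_sq_le_two_mul_norm_one_sub_mul_conj {z ξ : ℂ} (hz : ‖z‖ ≤ 1)
    (hξ : ‖ξ‖ ≤ 1) : 1 - ‖ξ‖ ^ 2 ≤ 2 * ‖1 - z * conj ξ‖ := by
  have hprod : ‖z * conj ξ‖ ≤ ‖ξ‖ := by
    rw [norm_mul, RCLike.norm_conj]
    exact mul_le_of_le_one_left (norm_nonneg ξ) hz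
  have htri : 1 - ‖z * conj ξ‖ ≤ ‖1 - z * conj ξ‖ := by
    simpa using norm_sub_norm_le (1 : ℂ) (z * conj ξ)
  nlinarith [norm_nonneg ξ]

theorem greenGradNorm_nonneg (z : ℂ) {ξ : ℂ} (hξ : ‖ξ‖ ≤ 1) : 0 ≤ greenGradNorm z ξ := by
  have : 0 ≤ 1 - ‖ξ‖ ^ 2 := by nlinarith [norm_nonneg ξ]
  unfold greenGradNorm
  positivity

theorem greenGradNorm_le {z ξ : ℂ} (hz : ‖z‖ ≤ 1) (hξ : ‖ξ‖ ≤ 1) :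
    greenGradNorm z ξ ≤ (2 * Real.pi)⁻¹ * ‖ξ - z‖⁻¹ := by
  have hratio : (1 - ‖ξ‖ ^ 2) / ‖1 - z * conj ξ‖ ≤ 2 := by
    rcases (norm_nonneg (1 - z * conj ξ)).eq_or_lt with h0 | hpos
    · simp [← h0]
    · exact (div_le_iff₀ hpos).2 (one_sub_norm_sq_le_two_mul_norm_one_sub_mul_conj hz hξ)
  calc greenGradNorm z ξ
      = (4 * Real.pi)⁻¹ * ((1 - ‖ξ‖ ^ 2) / ‖1 - z * conj ξ‖) * ‖ξ - z‖⁻¹ := by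
        rw [greenGradNorm, norm_sub_rev z ξ]; field_simp
    _ ≤ (4 * Real.pi)⁻¹ * 2 * ‖ξ - z‖⁻¹ := by gcongr
    _ = (2 * Real.pi)⁻¹ * ‖ξ - z‖⁻¹ := by field_simp; ring

theorem greenGradNorm_rpow_le {z ξ : ℂ} (hz : ‖z‖ ≤ 1) (hξ : ‖ξ‖ ≤ 1) {q : ℝ} (hq : 1 ≤ q) :
    greenGradNorm z ξ ^ q ≤ (2 * Real.pi)⁻¹ * ‖ξ - z‖ ^ (-q) := by
  have hc : (2 * Real.pi)⁻¹ ≤ 1 := inv_le_one_of_one_le₀ (by linarith [Real.pi_gt_three])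
  calc greenGradNorm z ξ ^ q ≤ ((2 * Real.pi)⁻¹ * ‖ξ - z‖⁻¹) ^ q := by
        gcongr
        exacts [greenGradNorm_nonneg z hξ, greenGradNorm_le hz hξ]
    _ = (2 * Real.pi)⁻¹ ^ q * ‖ξ - z‖ ^ (-q) := by
        rw [Real.mul_rpow (by positivity) (by positivity), Real.inv_rpow (norm_nonneg _),
          Real.rpow_neg (norm_nonneg _)]
    _ ≤ (2 * Real.pi)⁻¹ * ‖ξ - z‖ ^ (-q) := by
        gcongr
        exact Real.rpow_le_self_of_le_one (by positivity) hc hq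

theorem setIntegral_greenGradNorm_rpow_le {z : ℂ} (hz : ‖z‖ ≤ 1) {q : ℝ} (hq₁ : 1 ≤ q)
    (hq₂ : q < 2) :
    ∫ ξ in ball (0 : ℂ) 1, greenGradNorm z ξ ^ q ≤ 2 ^ (2 - q) / (2 - q) := by
  have hsub : ball (0 : ℂ) 1 ⊆ ball z 2 := fun ξ hξ ↦ by
    rw [mem_ball_zero_iff] at hξ
    rw [mem_ball, dist_eq_norm]
    linarith [norm_sub_le ξ z]
  have hmaj : IntegrableOn (fun ξ ↦ (2 * Real.pi)⁻¹ * ‖ξ - z‖ ^ (-q)) (ball z 2) :=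
    (integrableOn_ball_norm_sub_rpow volume z 2 (by simpa using hq₂)).const_mul _
  calc ∫ ξ in ball (0 : ℂ) 1, greenGradNorm z ξ ^ q
      ≤ ∫ ξ in ball (0 : ℂ) 1, (2 * Real.pi)⁻¹ * ‖ξ - z‖ ^ (-q) := by
        refine integral_mono_of_nonneg ?_ (hmaj.mono_set hsub) ?_
        all_goals refine ae_restrict_of_forall_mem measurableSet_ball fun ξ hξ ↦ ?_
        · exact Real.rpow_nonneg (greenGradNorm_nonneg z (mem_ball_zero_iff.1 hξ).le) q
        · exact greenGradNorm_rpow_le hz (mem_ball_zero_iff.1 hξ).le hq₁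
    _ ≤ ∫ ξ in ball z 2, (2 * Real.pi)⁻¹ * ‖ξ - z‖ ^ (-q) :=
        setIntegral_mono_set hmaj (.of_forall fun ξ ↦ by positivity) hsub.eventuallyLE
    _ = 2 ^ (2 - q) / (2 - q) := by
        rw [integral_const_mul,
          setIntegral_ball_norm_sub_rpow volume z zero_le_two (by simpa using hq₂)]
        simp only [finrank_real_complex, Nat.cast_ofNat, Measure.real, volume_ball,
          ENNReal.ofReal_one, one_pow, one_mul, ENNReal.coe_toReal, NNReal.coe_real_pi,
          ← sub_eq_add_neg]
        field_simp

theorem stmt12 (z : ℂ) (hz : z ∈ Metric.ball (0 : ℂ) 1) :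
    (∫ ξ in Metric.ball (0 : ℂ) 1,
        ((1 / (4 * Real.pi)) * (1 - ‖ξ‖ ^ 2)
            / (‖1 - z * (starRingEnd ℂ) ξ‖ * ‖z - ξ‖)) ^ ((3 : ℝ) / 2))
      < 6 * Real.pi / 5 := by
  have hbound := setIntegral_greenGradNorm_rpow_le (mem_ball_zero_iff.1 hz).le
    (q := 3 / 2) (by norm_num) (by norm_num)
  have hvalue : (2 : ℝ) ^ (2 - 3 / 2 : ℝ) / (2 - 3 / 2) < 3 := by
    rw [show (2 - 3 / 2 : ℝ) = 1 / 2 by norm_num, ← Real.sqrt_eq_rpow,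
      div_lt_iff₀ (by norm_num), Real.sqrt_lt' (by norm_num)]
    norm_num
  calc _ ≤ (2 : ℝ) ^ (2 - 3 / 2 : ℝ) / (2 - 3 / 2) := hbound
    _ < 6 * Real.pi / 5 := by linarith [Real.pi_gt_three]
end

section
/- For K > 1, (1/(2π)) ∫₀^{2π} |e^{it} - e^{iθ}|^{2K-2} dt = 2^{2K-2} Γ(K - 1/2) / (√π (K-1) Γ(K-1)), independently of θ; moreover this quantity is at least 1. -/
/-!
Put `s = 2K - 2`. Writing `|e^{it} - e^{iθ}| = 2 |sin ((t - θ) / 2)|` and using periodicity, the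
integral becomes `2^(s+1) ∫₀^π sin^s`, and the substitution `u = sin² x` on `[0, π/2]` turns `∫₀^π sin^s` into
the beta integral `B((s+1)/2, 1/2)`. The lower bound follows from Legendre's duplication formula,
which rewrites the value as `Γ(s+1) / Γ(s/2+1)²`, and from log-convexity of `Γ` between `1` and
`s + 1`.
-/

open Complex Real intervalIntegral MeasureTheory Set ProbabilityTheory

lemma norm_exp_mul_I_sub_exp_mul_I (t θ : ℝ) :
    ‖exp (t * I) - exp (θ * I)‖ = 2 * |Real.sin ((t - θ) / 2)| := by
  have h : exp (t * I) - exp (θ * I) = exp (θ * I) * (exp (I * ↑(t - θ)) - 1) := by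
    rw [mul_sub, ← Complex.exp_add, mul_one]; push_cast; ring_nf
  rw [h, norm_mul, norm_exp_ofReal_mul_I, one_mul, norm_exp_I_mul_ofReal_sub_one,
    Real.norm_eq_abs, abs_mul, abs_two]

lemma integral_rpow_mul_one_sub_rpow {a b : ℝ} (ha : 0 < a) (hb : 0 < b) :
    ∫ x in (0:ℝ)..1, x ^ (a - 1) * (1 - x) ^ (b - 1) = beta a b := by
  have h : betaIntegral a b = ↑(∫ x in (0:ℝ)..1, x ^ (a - 1) * (1 - x) ^ (b - 1)) := by
    rw [betaIntegral, ← intervalIntegral.integral_ofReal]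
    refine integral_congr fun x hx => ?_
    rw [uIcc_of_le zero_le_one] at hx
    push_cast
    rw [ofReal_cpow hx.1, ofReal_cpow (sub_nonneg.2 hx.2)]
    push_cast
    ring_nf
  rw [beta_eq_betaIntegralReal a b ha hb, h, ofReal_re]

lemma integral_sin_rpow_mul_cos_rpow {a b : ℝ} (ha : 0 < a) (hb : 0 < b) :
    ∫ x in (0:ℝ)..(π / 2), Real.sin x ^ (2 * a - 1) * Real.cos x ^ (2 * b - 1)
      = beta a b / 2 := by
  set f : ℝ → ℝ := fun x => Real.sin x ^ 2
  have hmono : StrictMonoOn f (Icc 0 (π / 2)) := fun x hx y hy hxy =>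
    pow_lt_pow_left₀
      (Real.strictMonoOn_sin ⟨by linarith [hx.1, pi_pos], hx.2⟩
        ⟨by linarith [hy.1, pi_pos], hy.2⟩ hxy)
      (Real.sin_nonneg_of_nonneg_of_le_pi hx.1 (by linarith [hx.2, pi_pos])) two_ne_zero
  have himage : f '' Ioo 0 (π / 2) = Ioo 0 1 := by
    rw [(by fun_prop : Continuous f).continuousOn.image_Ioo_of_strictMonoOn (by positivity) hmono]
    simp [f]
  have hderiv : ∀ x ∈ Ioo 0 (π / 2),
      HasDerivWithinAt f (2 * Real.sin x * Real.cos x) (Ioo 0 (π / 2)) x := by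
    intro x _
    simpa [f, mul_assoc] using ((Real.hasDerivAt_sin x).fun_pow 2).hasDerivWithinAt
  have hsubst := integral_image_eq_integral_abs_deriv_smul measurableSet_Ioo hderiv
    (hmono.injOn.mono Ioo_subset_Icc_self) fun u => u ^ (a - 1) * (1 - u) ^ (b - 1)
  rw [himage, ← integral_Ioc_eq_integral_Ioo, ← integral_of_le zero_le_one,
    integral_rpow_mul_one_sub_rpow ha hb] at hsubst
  rw [hsubst, integral_of_le (by positivity), integral_Ioc_eq_integral_Ioo,
    ← MeasureTheory.integral_div]
  refine setIntegral_congr_fun measurableSet_Ioo fun x hx => ?_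
  have hs : 0 < Real.sin x := Real.sin_pos_of_pos_of_lt_pi hx.1 (by linarith [hx.2, pi_pos])
  have hc : 0 < Real.cos x := Real.cos_pos_of_mem_Ioo ⟨by linarith [hx.1, pi_pos], hx.2⟩
  simp only [f, smul_eq_mul, ← Real.cos_sq']
  rw [abs_of_pos (by positivity), ← Real.rpow_natCast, ← Real.rpow_natCast,
    ← Real.rpow_mul hs.le, ← Real.rpow_mul hc.le,
    show 2 * a - 1 = ((2 : ℕ) : ℝ) * (a - 1) + 1 by push_cast; ring,
    show 2 * b - 1 = ((2 : ℕ) : ℝ) * (b - 1) + 1 by push_cast; ring,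
    Real.rpow_add_one hs.ne', Real.rpow_add_one hc.ne']
  ring

lemma integral_sin_rpow {s : ℝ} (hs : 0 ≤ s) :
    ∫ x in (0:ℝ)..π, Real.sin x ^ s = beta ((s + 1) / 2) (1 / 2) := by
  have hcont : Continuous fun x => Real.sin x ^ s :=
    Real.continuous_sin.rpow_const fun _ => Or.inr hs
  have hhalf := integral_sin_rpow_mul_cos_rpow (a := (s + 1) / 2) (b := 1 / 2) (by positivity)
    (by norm_num)
  rw [show 2 * ((s + 1) / 2) - 1 = s by ring, show 2 * (1 / 2 : ℝ) - 1 = 0 by norm_num] at hhalf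
  simp only [Real.rpow_zero, mul_one] at hhalf
  have hsymm : ∫ x in (π / 2)..π, Real.sin x ^ s = ∫ x in (0:ℝ)..(π / 2), Real.sin x ^ s := by
    simpa [Real.sin_pi_sub, sub_half] using
      integral_comp_sub_left (fun x => Real.sin x ^ s) π (a := π / 2) (b := π)
  rw [← integral_add_adjacent_intervals (hcont.intervalIntegrable 0 (π / 2))
    (hcont.intervalIntegrable (π / 2) π), hsymm, hhalf]
  ring

lemma integral_norm_exp_mul_I_sub_exp_mul_I_rpow (s θ : ℝ) :
    ∫ t in (0:ℝ)..(2 * π), ‖exp (t * I) - exp (θ * I)‖ ^ s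
      = 2 ^ (s + 1) * ∫ x in (0:ℝ)..π, Real.sin x ^ s := by
  set F : ℝ → ℝ := fun t => (2 * |Real.sin (t / 2)|) ^ s
  have hper : Function.Periodic F (2 * π) := fun t => by
    simp only [F, add_div, mul_div_cancel_left₀ π two_ne_zero, Real.sin_add_pi, abs_neg]
  have hshift : ∫ t in (0:ℝ)..(2 * π), F (t - θ) = ∫ t in (0:ℝ)..(2 * π), F t := by
    rw [integral_comp_sub_right, show 2 * π - θ = 0 - θ + 2 * π by ring,
      hper.intervalIntegral_add_eq, zero_add]
  have hscale : ∫ t in (0:ℝ)..(2 * π), F t = 2 * ∫ x in (0:ℝ)..π, F (2 * x) := by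
    simp [integral_comp_mul_left F two_ne_zero]
  have hsin : ∫ x in (0:ℝ)..π, F (2 * x) = 2 ^ s * ∫ x in (0:ℝ)..π, Real.sin x ^ s := by
    rw [← intervalIntegral.integral_const_mul]
    refine integral_congr fun x hx => ?_
    rw [uIcc_of_le pi_pos.le] at hx
    have hsin_nonneg := Real.sin_nonneg_of_nonneg_of_le_pi hx.1 hx.2
    simp only [F, mul_div_cancel_left₀ x two_ne_zero, abs_of_nonneg hsin_nonneg,
      Real.mul_rpow zero_le_two hsin_nonneg]
  simp_rw [norm_exp_mul_I_sub_exp_mul_I]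
  change ∫ t in (0:ℝ)..(2 * π), F (t - θ) = _
  rw [hshift, hscale, hsin, Real.rpow_add_one two_ne_zero]
  ring

lemma mean_norm_exp_mul_I_sub_exp_mul_I_rpow {s : ℝ} (hs : 0 ≤ s) (θ : ℝ) :
    1 / (2 * π) * ∫ t in (0:ℝ)..(2 * π), ‖exp (t * I) - exp (θ * I)‖ ^ s
      = 2 ^ s * Real.Gamma ((s + 1) / 2) / (√π * Real.Gamma (s / 2 + 1)) := by
  rw [integral_norm_exp_mul_I_sub_exp_mul_I_rpow, integral_sin_rpow hs, beta,
    Real.Gamma_one_half_eq, show (s + 1) / 2 + 1 / 2 = s / 2 + 1 by ring,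
    Real.rpow_add_one two_ne_zero]
  have hΓ : Real.Gamma (s / 2 + 1) ≠ 0 := (Real.Gamma_pos_of_pos (by positivity)).ne'
  have hπ : √π ≠ 0 := (Real.sqrt_pos.2 pi_pos).ne'
  field_simp
  rw [Real.sq_sqrt pi_pos.le]

lemma Gamma_div_two_add_one_sq_le_Gamma_add_one {s : ℝ} (hs : -1 < s) :
    Real.Gamma (s / 2 + 1) ^ 2 ≤ Real.Gamma (s + 1) := by
  have hpos : 0 < Real.Gamma (s + 1) := Real.Gamma_pos_of_pos (by linarith)
  have hconv := Real.Gamma_mul_add_mul_le_rpow_Gamma_mul_rpow_Gamma (s := 1) (t := s + 1)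
    (a := 1 / 2) (b := 1 / 2) one_pos (by linarith) (by norm_num) (by norm_num) (by norm_num)
  rw [Real.Gamma_one, Real.one_rpow, one_mul,
    show 1 / 2 * 1 + 1 / 2 * (s + 1) = s / 2 + 1 by ring, ← Real.sqrt_eq_rpow] at hconv
  calc Real.Gamma (s / 2 + 1) ^ 2 ≤ √(Real.Gamma (s + 1)) ^ 2 :=
        pow_le_pow_left₀ (Real.Gamma_pos_of_pos (by linarith)).le hconv 2
    _ = Real.Gamma (s + 1) := Real.sq_sqrt hpos.le

lemma one_le_two_rpow_mul_Gamma_div {s : ℝ} (hs : -1 < s) :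
    1 ≤ 2 ^ s * Real.Gamma ((s + 1) / 2) / (√π * Real.Gamma (s / 2 + 1)) := by
  have hdup : 2 ^ s * (Real.Gamma ((s + 1) / 2) * Real.Gamma (s / 2 + 1))
      = Real.Gamma (s + 1) * √π := by
    have h := Real.Gamma_mul_Gamma_add_half ((s + 1) / 2)
    rw [show (s + 1) / 2 + 1 / 2 = s / 2 + 1 by ring, show 2 * ((s + 1) / 2) = s + 1 by ring,
      show 1 - (s + 1) = -s by ring, Real.rpow_neg zero_le_two] at h
    have h2 : (2 : ℝ) ^ s ≠ 0 := (Real.rpow_pos_of_pos two_pos s).ne'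
    rw [h]
    field_simp
  have hΓ : 0 < Real.Gamma (s / 2 + 1) := Real.Gamma_pos_of_pos (by linarith)
  have hval : 2 ^ s * Real.Gamma ((s + 1) / 2) / (√π * Real.Gamma (s / 2 + 1))
      = Real.Gamma (s + 1) / Real.Gamma (s / 2 + 1) ^ 2 := by
    rw [div_eq_div_iff (by positivity) (by positivity)]
    linear_combination Real.Gamma (s / 2 + 1) * hdup
  rw [hval, one_le_div (by positivity)]
  exact Gamma_div_two_add_one_sq_le_Gamma_add_one hs

theorem stmt17 (K : ℝ) (hK : 1 < K) (θ : ℝ) :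
    (1 / (2 * Real.pi)) * (∫ t in (0:ℝ)..(2 * Real.pi),
        ‖Complex.exp (t * Complex.I) - Complex.exp (θ * Complex.I)‖ ^ (2 * K - 2))
      = 2 ^ (2 * K - 2) * Real.Gamma (K - 1 / 2)
          / (Real.sqrt Real.pi * (K - 1) * Real.Gamma (K - 1)) ∧
    1 ≤ 2 ^ (2 * K - 2) * Real.Gamma (K - 1 / 2)
          / (Real.sqrt Real.pi * (K - 1) * Real.Gamma (K - 1)) := by
  have hvalue : 2 ^ (2 * K - 2) * Real.Gamma (K - 1 / 2) / (√π * (K - 1) * Real.Gamma (K - 1))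
      = 2 ^ (2 * K - 2) * Real.Gamma ((2 * K - 2 + 1) / 2)
          / (√π * Real.Gamma ((2 * K - 2) / 2 + 1)) := by
    rw [show (2 * K - 2) / 2 + 1 = (K - 1) + 1 by ring, Real.Gamma_add_one (by linarith),
      show (2 * K - 2 + 1) / 2 = K - 1 / 2 by ring, mul_assoc]
  rw [hvalue]
  exact ⟨mean_norm_exp_mul_I_sub_exp_mul_I_rpow (by linarith) θ,
    one_le_two_rpow_mul_Gamma_div (by linarith)⟩
end

section
/- Suppose C ≥ 1, K ≥ 1, μ₁ > 0, μ₂ ≥ 0 satisfy C ≤ C^{1 - 1/K} μ₁ + μ₂. Then C ≤ (μ₁ + μ₂)^K; and if additionally (1 - 1/K)μ₁ < 1, then C ≤ (μ₁/K + μ₂)/(1 - μ₁(1 - 1/K)). -/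
/-!
Write `q = 1 - 1/K ∈ [0, 1]`. Since `C ≥ 1` we have `C ^ q ≥ 1`, so `μ₂ ≤ C ^ q μ₂` and the hypothesis gives
`C ≤ C ^ q (μ₁ + μ₂)`, i.e. `C ^ (1/K) ≤ μ₁ + μ₂`. For the second bound, Bernoulli's inequality
`C ^ q ≤ 1 + q (C - 1)` turns the hypothesis into an inequality linear in `C`, which is solved for `C`.
-/

lemma rpow_one_sub_le_of_le_rpow_mul_add {x q a b : ℝ} (hx : 1 ≤ x) (hq : 0 ≤ q) (hb : 0 ≤ b)
    (h : x ≤ x ^ q * a + b) : x ^ (1 - q) ≤ a + b := by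
  have hxq : 1 ≤ x ^ q := Real.one_le_rpow hx hq
  have hsplit : x ^ q * x ^ (1 - q) = x := by
    rw [← Real.rpow_add (by linarith), add_sub_cancel, Real.rpow_one]
  have hle : x ^ q * x ^ (1 - q) ≤ x ^ q * (a + b) := by
    rw [hsplit]; nlinarith
  exact le_of_mul_le_mul_left hle (by linarith)

lemma le_div_of_le_rpow_mul_add {x q a b : ℝ} (hx : 0 ≤ x) (hq₀ : 0 ≤ q) (hq₁ : q ≤ 1) (ha : 0 ≤ a)
    (hqa : q * a < 1) (h : x ≤ x ^ q * a + b) : x ≤ ((1 - q) * a + b) / (1 - q * a) := by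
  have bernoulli : x ^ q ≤ 1 + q * (x - 1) := by
    simpa using rpow_one_add_le_one_add_mul_self (s := x - 1) (by linarith) hq₀ hq₁
  have hlin : x ≤ (1 + q * (x - 1)) * a + b :=
    h.trans (by gcongr)
  rw [le_div_iff₀ (by linarith)]
  linarith

theorem stmt19 (C K μ₁ μ₂ : ℝ) (hC : 1 ≤ C) (hK : 1 ≤ K) (hμ₁ : 0 < μ₁)
    (hμ₂ : 0 ≤ μ₂) (h : C ≤ C ^ (1 - 1 / K) * μ₁ + μ₂) :
    C ≤ (μ₁ + μ₂) ^ K ∧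
    ((1 - 1 / K) * μ₁ < 1 → C ≤ (μ₁ / K + μ₂) / (1 - μ₁ * (1 - 1 / K))) := by
  have hK₀ : 0 < K := by linarith
  have hq₀ : 0 ≤ 1 - 1 / K := sub_nonneg.2 (div_le_one_of_le₀ hK hK₀.le)
  have hq₁ : 1 - 1 / K ≤ 1 := by
    linarith [one_div_nonneg.2 hK₀.le]
  refine ⟨?_, fun hlt => ?_⟩
  · have hroot := rpow_one_sub_le_of_le_rpow_mul_add hC hq₀ hμ₂ h
    rwa [sub_sub_cancel, one_div, Real.rpow_inv_le_iff_of_pos (by linarith) (by positivity) hK₀]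
      at hroot
  · convert le_div_of_le_rpow_mul_add (by linarith) hq₀ hq₁ hμ₁.le hlt h using 2 <;> ring
end
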